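/- Let G be a k-regular simple graph on n vertices with distinct adjacency eigenvalues k = θ_0 > θ_1 > ⋯ > θ_d, where d ≥ 2. Let θ_i be the largest eigenvalue such that θ_i ≤ −1 (such an eigenvalue exists and i ≥ 1). Then χ_2(G) ≥ n / ⌊ n·(θ_0 + θ_i·θ_{i−1}) / ((θ_0 − θ_i)(θ_0 − θ_{i−1})) ⌋. -/

import Mathlib

open Finset Polynomial

/-- The `t`-th power graph: vertices are adjacent when they are distinct and at
graph (geodesic) distance at most `t` in `G`. -/
def powerGraph {V : Type*} (G : SimpleGraph V) (t : ℕ) : SimpleGraph V where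
  Adj u v := u ≠ v ∧ G.Reachable u v ∧ G.dist u v ≤ t
  symm := by
    constructor
    rintro u v ⟨h1, h2, h3⟩
    exact ⟨h1.symm, h2.symm, by rwa [SimpleGraph.dist_comm]⟩
  loopless := ⟨fun v h => h.1 rfl⟩

/-- The distance-`t` chromatic number of a graph. -/
noncomputable def distChromaticNumber {V : Type*} (G : SimpleGraph V) (t : ℕ) : ℕ∞ :=
  (powerGraph G t).chromaticNumber

/-- `x` is an eigenvalue of the (real) adjacency matrix of `G`. -/
def IsAdjEigenvalue {V : Type*} [Fintype V] [DecidableEq V] (G : SimpleGraph V)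
    [DecidableRel G.Adj] (x : ℝ) : Prop :=
  ∃ v : V → ℝ, v ≠ 0 ∧ (SimpleGraph.adjMatrix ℝ G).mulVec v = x • v

/-- The hypercube graph `Q_n`. -/
def hypercube (n : ℕ) : SimpleGraph (Fin n → Fin 2) where
  Adj u v := hammingDist u v = 1
  symm := ⟨fun u v (h : hammingDist u v = 1) => show hammingDist v u = 1 by rwa [hammingDist_comm]⟩
  loopless := ⟨fun u (h : hammingDist u u = 1) => by simp only [hammingDist_self] at h; exact absurd h (by norm_num)⟩

noncomputable instance (n : ℕ) : DecidableRel (hypercube n).Adj :=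
  fun _ _ => Classical.dec _

/-- The Lee graph `G(n,q)`: the `n`-fold Cartesian product of the `q`-cycle. -/
def leeGraph (n q : ℕ) : SimpleGraph (Fin n → ZMod q) where
  Adj u v := u ≠ v ∧ ∃ i, (u i = v i + 1 ∨ v i = u i + 1) ∧ ∀ j, j ≠ i → u j = v j
  symm := by
    constructor
    rintro u v ⟨hne, i, h, hj⟩
    exact ⟨hne.symm, i, h.symm, fun j hji => (hj j hji).symm⟩
  loopless := ⟨fun u h => h.1 rfl⟩

noncomputable instance (n q : ℕ) : DecidableRel (leeGraph n q).Adj :=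
  fun _ _ => Classical.dec _

/-- The Lee distance on `(ℤ/qℤ)^n`. -/
def leeDist {n q : ℕ} (b c : Fin n → ZMod q) : ℕ :=
  ∑ i, min ((b i - c i).val) (q - (b i - c i).val)

section AuxSpectral
open Matrix

lemma conj_diag_eq {N : ℕ} {A : Matrix (Fin N) (Fin N) ℝ} (hA : A.IsHermitian) :
    A = (hA.eigenvectorUnitary : Matrix (Fin N) (Fin N) ℝ) * diagonal hA.eigenvalues
      * star (hA.eigenvectorUnitary : Matrix (Fin N) (Fin N) ℝ) := by
  convert hA.spectral_theorem using 3
  simp [Unitary.conjStarAlgAut_apply]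

lemma shift_posSemidef {N : ℕ} {A : Matrix (Fin N) (Fin N) ℝ} (hA : A.IsHermitian) {c : ℝ}
    (h : ∀ j, c ≤ hA.eigenvalues j) : (A - c • (1 : Matrix (Fin N) (Fin N) ℝ)).PosSemidef := by
  set U : Matrix (Fin N) (Fin N) ℝ := (hA.eigenvectorUnitary : Matrix (Fin N) (Fin N) ℝ) with hUdef
  set D : Matrix (Fin N) (Fin N) ℝ := diagonal hA.eigenvalues with hDdef
  have hU1 : U * star U = 1 := (Matrix.mem_unitaryGroup_iff).mp hA.eigenvectorUnitary.2
  have key : A - c • (1 : Matrix (Fin N) (Fin N) ℝ) = U * (D - c • 1) * star U := by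
    rw [Matrix.mul_sub, Matrix.sub_mul]
    congr 1
    · exact conj_diag_eq hA
    · rw [Matrix.mul_smul, Matrix.smul_mul, Matrix.mul_one, hU1]
  have hdiag : D - c • (1 : Matrix (Fin N) (Fin N) ℝ)
      = diagonal (fun j => hA.eigenvalues j - c) := by
    ext j l
    rcases eq_or_ne j l with rfl | hne
    · simp [hDdef]
    · simp [hDdef, Matrix.diagonal_apply_ne _ hne, Matrix.one_apply_ne hne]
  rw [key, hdiag]
  have hd : (diagonal (fun j => hA.eigenvalues j - c)).PosSemidef :=
    Matrix.PosSemidef.diagonal (fun j => sub_nonneg.mpr (h j))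
  simpa [Matrix.star_eq_conjTranspose] using hd.mul_mul_conjTranspose_same U

lemma quad_posSemidef {N : ℕ} {A : Matrix (Fin N) (Fin N) ℝ} (hA : A.IsHermitian) {a b : ℝ}
    (h : ∀ j, 0 ≤ (hA.eigenvalues j - a) * (hA.eigenvalues j - b)) :
    (A * A - (a + b) • A + (a * b) • (1 : Matrix (Fin N) (Fin N) ℝ)).PosSemidef := by
  set U : Matrix (Fin N) (Fin N) ℝ := (hA.eigenvectorUnitary : Matrix (Fin N) (Fin N) ℝ) with hUdef
  set D : Matrix (Fin N) (Fin N) ℝ := diagonal hA.eigenvalues with hDdef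
  have hU1 : U * star U = 1 := (Matrix.mem_unitaryGroup_iff).mp hA.eigenvectorUnitary.2
  have hU2 : star U * U = 1 := (Matrix.mem_unitaryGroup_iff').mp hA.eigenvectorUnitary.2
  have key : A * A - (a + b) • A + (a * b) • (1 : Matrix (Fin N) (Fin N) ℝ)
      = U * (D * D - (a + b) • D + (a * b) • 1) * star U := by
    rw [Matrix.mul_add, Matrix.add_mul, Matrix.mul_sub, Matrix.sub_mul]
    congr 2
    · conv_lhs => rw [conj_diag_eq hA]
      simp only [Matrix.mul_assoc]
      rw [← Matrix.mul_assoc (star U) U, hU2, Matrix.one_mul]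
    · conv_lhs => rw [conj_diag_eq hA]
      rw [Matrix.mul_smul, Matrix.smul_mul]
    · rw [Matrix.mul_smul, Matrix.smul_mul, Matrix.mul_one, hU1]
  have hdiag : D * D - (a + b) • D + (a * b) • (1 : Matrix (Fin N) (Fin N) ℝ)
      = diagonal (fun j => (hA.eigenvalues j - a) * (hA.eigenvalues j - b)) := by
    ext j l
    rcases eq_or_ne j l with rfl | hne
    · simp [hDdef, Matrix.diagonal_mul_diagonal]
      ring
    · simp [hDdef, Matrix.diagonal_apply_ne _ hne, Matrix.one_apply_ne hne,
        Matrix.diagonal_mul_diagonal]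
  rw [key, hdiag]
  have hd := Matrix.posSemidef_diagonal_iff.mpr h
  simpa [Matrix.star_eq_conjTranspose] using hd.mul_mul_conjTranspose_same U

lemma eig_is_eig {N : ℕ} {A : Matrix (Fin N) (Fin N) ℝ} (hA : A.IsHermitian) (j : Fin N) :
    ∃ v : Fin N → ℝ, v ≠ 0 ∧ A.mulVec v = hA.eigenvalues j • v := by
  refine ⟨hA.eigenvectorBasis j, ?_, hA.mulVec_eigenvectorBasis j⟩
  have h0 := hA.eigenvectorBasis.orthonormal.ne_zero j
  intro hcontra
  apply h0
  ext l
  exact congrFun hcontra l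


end AuxSpectral

open Matrix

/-- optimal Ratio-type bound for `χ₂` of regular graphs.
If `G` is `k`-regular on `n` vertices with distinct eigenvalues `k = θ 0 > ⋯ > θ d`, `d ≥ 2`,
then there is a largest eigenvalue `θ i ≤ −1`; it has `i ≥ 1` and
`χ₂(G) ≥ n / ⌊n (θ 0 + θ i θ (i−1)) / ((θ 0 − θ i)(θ 0 − θ (i−1)))⌋`. -/
theorem stmt2 {n k : ℕ} (G : SimpleGraph (Fin n)) [DecidableRel G.Adj]
    (hreg : G.IsRegularOfDegree k)
    (d : ℕ) (hd : 2 ≤ d) (θ : Fin (d + 1) → ℝ) (hθ : StrictAnti θ) (hθ0 : θ 0 = (k : ℝ))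
    (hspec : {x : ℝ | IsAdjEigenvalue G x} = Set.range θ) :
    ∃ i : Fin (d + 1), 0 < i.1 ∧
      IsGreatest {x : ℝ | IsAdjEigenvalue G x ∧ x ≤ -1} (θ i) ∧
      (n : ℝ) / (⌊(n : ℝ) * (θ 0 + θ i * θ ⟨i.1 - 1, (Nat.sub_le i.1 1).trans_lt i.isLt⟩) /
            ((θ 0 - θ i) * (θ 0 - θ ⟨i.1 - 1, (Nat.sub_le i.1 1).trans_lt i.isLt⟩))⌋ : ℤ)
        ≤ ((distChromaticNumber G 2).toNat : ℝ) := by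
  classical
  set A := SimpleGraph.adjMatrix ℝ G with hAdef
  have hA : A.IsHermitian := by
    unfold Matrix.IsHermitian
    ext u v
    simp [hAdef, Matrix.conjTranspose_apply, SimpleGraph.adjMatrix_apply, SimpleGraph.adj_comm]
  have hrange : ∀ j : Fin n, ∃ m : Fin (d + 1), hA.eigenvalues j = θ m := by
    intro j
    have h1 : IsAdjEigenvalue G (hA.eigenvalues j) := eig_is_eig hA j
    have h2 : hA.eigenvalues j ∈ Set.range θ := by
      rw [← hspec]; exact h1
    obtain ⟨m, hm⟩ := h2
    exact ⟨m, hm.symm⟩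
  have hmemθ : ∀ m : Fin (d + 1), IsAdjEigenvalue G (θ m) := by
    intro m
    have : θ m ∈ Set.range θ := ⟨m, rfl⟩
    rw [← hspec] at this
    exact this
  have hn : 0 < n := by
    rcases Nat.eq_zero_or_pos n with rfl | h
    · obtain ⟨v, hv0, -⟩ := hmemθ 0
      exact absurd (Subsingleton.elim v 0) hv0
    · exact h
  have hk : 0 < k := by
    by_contra hk0
    have hk0 : k = 0 := by omega
    subst hk0
    have hnoadj : ∀ u v : Fin n, ¬ G.Adj u v := by
      intro u v huv
      have h1 : v ∈ G.neighborFinset u := (SimpleGraph.mem_neighborFinset G u v).mpr huv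
      have h2 := hreg u
      rw [SimpleGraph.degree] at h2
      rw [Finset.card_eq_zero] at h2
      simp [h2] at h1
    have hzero : ∀ x : ℝ, IsAdjEigenvalue G x → x = 0 := by
      rintro x ⟨v, hv0, hv⟩
      have hAv : A.mulVec v = 0 := by
        ext u
        simp [hAdef, Matrix.mulVec, dotProduct, SimpleGraph.adjMatrix_apply, hnoadj]
      rcases (smul_eq_zero.mp (hv.symm.trans hAv)) with h | h
      · exact h
      · exact absurd h hv0
    have h0 : θ 0 = 0 := hzero _ (hmemθ 0)
    have h1 : θ ⟨1, by omega⟩ = 0 := hzero _ (hmemθ ⟨1, by omega⟩)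
    have hlt : (0 : Fin (d + 1)) < ⟨1, by omega⟩ := by
      rw [Fin.lt_def]
      simp
    have := hθ hlt
    rw [h0, h1] at this
    exact lt_irrefl _ this
  -- the smallest eigenvalue is at most -1
  have hlast : θ (Fin.last d) ≤ -1 := by
    have hpsd : (A - θ (Fin.last d) • (1 : Matrix (Fin n) (Fin n) ℝ)).PosSemidef := by
      apply shift_posSemidef hA
      intro j
      obtain ⟨m, hm⟩ := hrange j
      rw [hm]
      exact hθ.antitone (Fin.le_last m)
    -- pick an edge
    obtain ⟨u, v, huv⟩ : ∃ u v : Fin n, G.Adj u v := by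
      have hu : (0 : ℕ) < n := hn
      set u : Fin n := ⟨0, hn⟩
      have : 0 < G.degree u := by rw [hreg u]; exact hk
      rw [SimpleGraph.degree, Finset.card_pos] at this
      obtain ⟨v, hv⟩ := this
      exact ⟨u, v, (SimpleGraph.mem_neighborFinset G u v).mp hv⟩
    set x : Fin n → ℝ := Pi.single u 1 - Pi.single v 1 with hxdef
    have hq := hpsd.dotProduct_mulVec_nonneg x
    rw [star_trivial] at hq
    have hne : u ≠ v := G.ne_of_adj huv
    have hAx : ∀ w, (A *ᵥ x) w
        = (if G.Adj w u then (1:ℝ) else 0) - (if G.Adj w v then (1:ℝ) else 0) := by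
      intro w
      rw [hAdef, SimpleGraph.adjMatrix_mulVec_apply, hxdef]
      simp only [Pi.sub_apply]
      rw [Finset.sum_sub_distrib]
      congr 1
      · simp [Pi.single_apply, Finset.sum_ite_eq', SimpleGraph.mem_neighborFinset]
      · simp [Pi.single_apply, Finset.sum_ite_eq', SimpleGraph.mem_neighborFinset]
    have hxA : x ⬝ᵥ (A *ᵥ x) = -2 := by
      rw [dotProduct]
      simp only [hAx, hxdef, Pi.sub_apply, Pi.single_apply, sub_mul, ite_mul, one_mul, zero_mul]
      rw [Finset.sum_sub_distrib, Finset.sum_ite_eq' Finset.univ u,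
        Finset.sum_ite_eq' Finset.univ v]
      have h1 : ¬ G.Adj u u := G.irrefl
      have h2 : G.Adj v u := huv.symm
      have h3 : ¬ G.Adj v v := G.irrefl
      rw [← hxdef]
      simp [hAx, huv, h1, h2, h3]
      norm_num
    have hxx : x ⬝ᵥ x = 2 := by
      rw [dotProduct]
      simp only [hxdef, Pi.sub_apply, Pi.single_apply, sub_mul, ite_mul, one_mul, zero_mul]
      rw [Finset.sum_sub_distrib, Finset.sum_ite_eq' Finset.univ u,
        Finset.sum_ite_eq' Finset.univ v]
      simp [hne, hne.symm]
      norm_num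
    rw [Matrix.sub_mulVec, dotProduct_sub, Matrix.smul_mulVec, Matrix.one_mulVec,
      dotProduct_smul, hxA, hxx, smul_eq_mul] at hq
    linarith
  -- define i as least index with θ i ≤ -1
  have hSne : (Finset.univ.filter (fun j : Fin (d + 1) => θ j ≤ -1)).Nonempty :=
    ⟨Fin.last d, by simp [hlast]⟩
  set i : Fin (d + 1) := (Finset.univ.filter (fun j : Fin (d + 1) => θ j ≤ -1)).min' hSne
    with hidef
  have hiS : θ i ≤ -1 := by
    have := Finset.min'_mem _ hSne
    rw [Finset.mem_filter] at this
    exact this.2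
  have hmini : ∀ m : Fin (d + 1), θ m ≤ -1 → i ≤ m := by
    intro m hm
    exact Finset.min'_le _ _ (by simp [hm])
  have hipos : 0 < i.1 := by
    rcases Nat.eq_zero_or_pos i.1 with h0 | h
    · exfalso
      have : i = 0 := Fin.ext h0
      rw [this, hθ0] at hiS
      have : (1 : ℝ) ≤ (k : ℝ) := by exact_mod_cast hk
      linarith
    · exact h
  refine ⟨i, hipos, ⟨⟨hmemθ i, hiS⟩, ?_⟩, ?_⟩
  · rintro x ⟨hx1, hx2⟩
    have : x ∈ Set.range θ := by rw [← hspec]; exact hx1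
    obtain ⟨m, rfl⟩ := this
    exact hθ.antitone (hmini m hx2)
  set i' : Fin (d + 1) := ⟨i.1 - 1, (Nat.sub_le i.1 1).trans_lt i.isLt⟩ with hi'def
  by_cases hi1 : i.1 = 1
  · -- degenerate case: denominator is zero
    have hzero : θ 0 - θ i' = 0 := by
      have : i' = 0 := by
        rw [hi'def]
        apply Fin.ext
        simp [hi1]
      rw [this]
      ring
    rw [hzero, mul_zero, div_zero, Int.floor_zero, Int.cast_zero, div_zero]
    positivity
  -- main case : i.1 ≥ 2
  have hi2 : 2 ≤ i.1 := by omega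
  set a : ℝ := θ i with hadef2
  set b : ℝ := θ i' with hbdef2
  have hi'lt : i' < i := by
    rw [Fin.lt_def, hi'def]
    show i.1 - 1 < i.1
    omega
  have hi'pos : 0 < i'.1 := by
    rw [hi'def]
    simp
    omega
  have hab : a < b := hθ hi'lt
  have h0i' : (0 : Fin (d + 1)) < i' := by
    rw [Fin.lt_def]
    simpa using hi'pos
  have h0i : (0 : Fin (d + 1)) < i := by
    rw [Fin.lt_def]
    simpa using hipos
  have hblt : b < θ 0 := hθ h0i'
  have halt : a < θ 0 := hθ h0i
  have hquad : ∀ j : Fin n, 0 ≤ (hA.eigenvalues j - a) * (hA.eigenvalues j - b) := by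
    intro j
    obtain ⟨m, hm⟩ := hrange j
    rw [hm]
    rcases le_or_gt m i' with h | h
    · have hb : b ≤ θ m := hθ.antitone h
      have ha : a ≤ θ m := le_trans hab.le hb
      exact mul_nonneg (by linarith) (by linarith)
    · have him : i ≤ m := by
        rw [Fin.le_def]
        rw [Fin.lt_def, hi'def] at h
        simp at h
        omega
      have ha : θ m ≤ a := hθ.antitone him
      have hb : θ m ≤ b := le_trans ha hab.le
      nlinarith
  set B : Matrix (Fin n) (Fin n) ℝ := A * A - (a + b) • A + (a * b) • 1 with hBdef
  have hBpsd : B.PosSemidef := quad_posSemidef hA hquad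
  set pk : ℝ := ((k : ℝ) - a) * ((k : ℝ) - b) with hpkdef
  have hpk : 0 < pk := by
    rw [hθ0] at halt hblt
    exact mul_pos (by linarith) (by linarith)
  have hB1 : B *ᵥ (fun _ => (1 : ℝ)) = fun _ => pk := by
    have hA1 : A *ᵥ (fun _ => (1 : ℝ)) = fun _ => (k : ℝ) := by
      ext u
      rw [hAdef]
      have := SimpleGraph.adjMatrix_mulVec_const_apply_of_regular (α := ℝ) (a := (1:ℝ)) hreg
        (v := u)
      simpa using this
    have hA2 : A *ᵥ (fun _ => (k : ℝ)) = fun _ => (k : ℝ) * (k : ℝ) := by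
      ext u
      rw [hAdef]
      have := SimpleGraph.adjMatrix_mulVec_const_apply_of_regular (α := ℝ) (a := ((k:ℝ))) hreg
        (v := u)
      simpa using this
    ext u
    rw [hBdef, Matrix.add_mulVec, Matrix.sub_mulVec, ← Matrix.mulVec_mulVec,
      Matrix.smul_mulVec, Matrix.smul_mulVec, Matrix.one_mulVec, hA1, hA2]
    simp only [Pi.add_apply, Pi.sub_apply, Pi.smul_apply, smul_eq_mul]
    rw [hpkdef]
    ring
  -- quadratic form lower bound
  have hQF : ∀ x : Fin n → ℝ, pk / n * (∑ u, x u)^2 ≤ x ⬝ᵥ (B *ᵥ x) := by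
    intro x
    set c : ℝ := (∑ u, x u) / n with hcdef
    set o : Fin n → ℝ := fun _ => 1 with hodef
    set y : Fin n → ℝ := x - c • o with hydef
    have hnR : (0:ℝ) < n := by exact_mod_cast hn
    have hx : x = y + c • o := by rw [hydef, sub_add_cancel]
    have hsumy : ∑ u, y u = 0 := by
      rw [hydef]
      simp only [Pi.sub_apply, Pi.smul_apply, hodef, smul_eq_mul, mul_one]
      rw [Finset.sum_sub_distrib, Finset.sum_const, Finset.card_univ, Fintype.card_fin,
        nsmul_eq_mul, hcdef]
      field_simp
      ring
    have hyBo : y ⬝ᵥ (B *ᵥ o) = 0 := by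
      rw [hB1, dotProduct, ← Finset.sum_mul, hsumy, zero_mul]
    have hBT : Bᵀ = B := by
      have hH := hBpsd.1
      rw [Matrix.IsHermitian] at hH
      conv_rhs => rw [← hH]
      ext p q
      simp [Matrix.conjTranspose_apply]
    have hoBy : o ⬝ᵥ (B *ᵥ y) = 0 := by
      rw [Matrix.dotProduct_mulVec, ← Matrix.mulVec_transpose, hBT, hB1, dotProduct,
        ← Finset.mul_sum, hsumy, mul_zero]
    have hoBo : o ⬝ᵥ (B *ᵥ o) = pk * n := by
      rw [hB1, dotProduct]
      simp only [hodef, one_mul]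
      rw [Finset.sum_const, Finset.card_univ, Fintype.card_fin, nsmul_eq_mul]
      ring
    have hyBy : 0 ≤ y ⬝ᵥ (B *ᵥ y) := by simpa using hBpsd.dotProduct_mulVec_nonneg y
    have expand : x ⬝ᵥ (B *ᵥ x)
        = y ⬝ᵥ (B *ᵥ y) + c * (y ⬝ᵥ (B *ᵥ o)) + c * (o ⬝ᵥ (B *ᵥ y))
          + c * c * (o ⬝ᵥ (B *ᵥ o)) := by
      conv_lhs => rw [hx]
      simp only [Matrix.mulVec_add, Matrix.mulVec_smul, add_dotProduct,
        dotProduct_add, smul_dotProduct, dotProduct_smul, smul_eq_mul]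
      ring
    rw [expand, hyBo, hoBy, hoBo]
    have hc2 : pk / n * (∑ u, x u)^2 = c * c * (pk * n) := by
      rw [hcdef]
      field_simp
    rw [hc2]
    linarith
  -- independent set bound
  have hIS : ∀ S : Finset (Fin n),
      ((S : Set (Fin n)).Pairwise fun u v => ¬ (powerGraph G 2).Adj u v) →
      pk / n * (S.card : ℝ)^2 ≤ (S.card : ℝ) * ((k : ℝ) + a * b) := by
    intro S hSind
    set x : Fin n → ℝ := fun u => if u ∈ S then 1 else 0 with hxdef
    have hsum : ∑ u, x u = S.card := by
      simp [hxdef]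
    have hform : x ⬝ᵥ (B *ᵥ x) = (S.card : ℝ) * ((k : ℝ) + a * b) := by
      have hstep : x ⬝ᵥ (B *ᵥ x) = ∑ u ∈ S, ∑ v ∈ S, B u v := by
        rw [dotProduct]
        rw [show ∑ u, x u * (B *ᵥ x) u = ∑ u ∈ S, (B *ᵥ x) u by
          simp only [hxdef, ite_mul, one_mul, zero_mul]
          rw [Finset.sum_ite_mem, Finset.univ_inter]]
        apply Finset.sum_congr rfl
        intro u hu
        rw [Matrix.mulVec, dotProduct]
        simp only [hxdef, mul_ite, mul_one, mul_zero]
        rw [Finset.sum_ite_mem, Finset.univ_inter]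
      rw [hstep]
      have hentry : ∀ u ∈ S, ∑ v ∈ S, B u v = (k : ℝ) + a * b := by
        intro u hu
        have hBval : ∀ v ∈ S, B u v = if v = u then (k : ℝ) + a * b else 0 := by
          intro v hv
          rcases eq_or_ne v u with rfl | hne
          · simp only [if_pos rfl]
            rw [hBdef]
            simp only [Matrix.add_apply, Matrix.sub_apply, Matrix.smul_apply, smul_eq_mul]
            rw [hAdef]
            rw [SimpleGraph.adjMatrix_mul_self_apply_self, hreg v]
            simp [Matrix.one_apply_eq]
          · have hnadj : ¬ (powerGraph G 2).Adj u v := hSind hu hv hne.symm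
            have hAuv : A u v = 0 := by
              rw [hAdef, SimpleGraph.adjMatrix_apply, if_neg]
              intro hadj
              exact hnadj (show u ≠ v ∧ G.Reachable u v ∧ G.dist u v ≤ 2 from ⟨hne.symm, hadj.reachable,
                le_trans (SimpleGraph.dist_le hadj.toWalk) (by simp)⟩)
            have hAAuv : (A * A) u v = 0 := by
              rw [hAdef, SimpleGraph.adjMatrix_mul_apply]
              apply Finset.sum_eq_zero
              intro w hw
              rw [SimpleGraph.adjMatrix_apply, if_neg]
              intro hadj
              have huw : G.Adj u w := (SimpleGraph.mem_neighborFinset G u w).mp hw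
              have hwalk : G.Walk u v :=
                SimpleGraph.Walk.cons huw (SimpleGraph.Walk.cons hadj SimpleGraph.Walk.nil)
              refine hnadj (show u ≠ v ∧ G.Reachable u v ∧ G.dist u v ≤ 2 from ⟨hne.symm, ⟨hwalk⟩, le_trans (SimpleGraph.dist_le
                (SimpleGraph.Walk.cons huw (SimpleGraph.Walk.cons hadj SimpleGraph.Walk.nil)))
                ?_⟩)
              simp
            rw [if_neg hne]
            rw [hBdef]
            simp only [Matrix.add_apply, Matrix.sub_apply, Matrix.smul_apply, smul_eq_mul]
            rw [hAAuv, hAuv, Matrix.one_apply_ne hne.symm]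
            ring
        rw [Finset.sum_congr rfl hBval, Finset.sum_ite_eq' S u]
        rw [if_pos hu]
      rw [Finset.sum_congr rfl hentry, Finset.sum_const, nsmul_eq_mul]
    have := hQF x
    rw [hform, hsum] at this
    exact this
  -- the ratio is at least 1
  have hnR : (0:ℝ) < n := by exact_mod_cast hn
  have hα1 : (1 : ℝ) ≤ (n : ℝ) * ((k : ℝ) + a * b) / pk := by
    have h1 := hIS {⟨0, hn⟩}
      (by rw [Finset.coe_singleton]; exact Set.pairwise_singleton _ _)
    simp only [Finset.card_singleton, Nat.cast_one, one_pow, mul_one, one_mul] at h1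
    rw [le_div_iff₀ hpk, one_mul]
    calc pk = (pk / n) * n := by field_simp
    _ ≤ ((k : ℝ) + a * b) * n := by
        apply mul_le_mul_of_nonneg_right h1 (le_of_lt hnR)
    _ = (n : ℝ) * ((k : ℝ) + a * b) := by ring
  have hcard : ∀ S : Finset (Fin n),
      ((S : Set (Fin n)).Pairwise fun u v => ¬ (powerGraph G 2).Adj u v) →
      (S.card : ℤ) ≤ ⌊(n : ℝ) * ((k : ℝ) + a * b) / pk⌋ := by
    intro S hSind
    rw [Int.le_floor]
    rcases Nat.eq_zero_or_pos S.card with h0 | hpos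
    · rw [h0]
      push_cast
      linarith
    · have hIS' := hIS S hSind
      have hc : (0:ℝ) < S.card := by exact_mod_cast hpos
      push_cast
      rw [le_div_iff₀ hpk]
      have h2 : pk * (S.card : ℝ)^2 ≤ (S.card : ℝ) * ((k:ℝ) + a * b) * n := by
        have h4 := mul_le_mul_of_nonneg_right hIS' hnR.le
        calc pk * (S.card : ℝ)^2 = pk / n * (S.card : ℝ)^2 * n := by field_simp
        _ ≤ (S.card : ℝ) * ((k:ℝ) + a * b) * n := h4
      have h3 := le_of_mul_le_mul_right
        (by linear_combination h2 :
          (S.card : ℝ) * pk * (S.card : ℝ) ≤ (n : ℝ) * ((k:ℝ) + a * b) * (S.card : ℝ)) hc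
      exact h3
  -- chromatic number
  set H := powerGraph G 2 with hHdef
  obtain ⟨C⟩ := H.colorable_chromaticNumber_of_fintype
  set m := H.chromaticNumber.toNat with hmdef
  have hfib : ∀ c : Fin m,
      (((Finset.univ.filter (fun v => C v = c)) : Finset (Fin n)) : Set (Fin n)).Pairwise
        (fun u v => ¬ (powerGraph G 2).Adj u v) := by
    intro c u hu v hv huv hadj
    simp only [Finset.coe_filter, Set.mem_setOf_eq, Finset.mem_univ, true_and] at hu hv
    exact (C.valid hadj) (hu.trans hv.symm)
  have hsumfib : ∑ c : Fin m, (Finset.univ.filter (fun v => C v = c)).card = n := by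
    rw [← Finset.card_eq_sum_card_fiberwise (fun v _ => Finset.mem_univ (C v))]
    simp
  have hnm : (n : ℤ) ≤ (m : ℤ) * ⌊(n : ℝ) * ((k : ℝ) + a * b) / pk⌋ := by
    calc (n : ℤ) = ∑ c : Fin m, ((Finset.univ.filter (fun v => C v = c)).card : ℤ) := by
          rw [← Nat.cast_sum, hsumfib]
    _ ≤ ∑ _c : Fin m, ⌊(n : ℝ) * ((k : ℝ) + a * b) / pk⌋ :=
          Finset.sum_le_sum (fun c _ => hcard _ (hfib c))
    _ = (m : ℤ) * ⌊(n : ℝ) * ((k : ℝ) + a * b) / pk⌋ := by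
          rw [Finset.sum_const, Finset.card_univ, Fintype.card_fin, nsmul_eq_mul]
  have hfloorpos : 0 < ⌊(n : ℝ) * ((k : ℝ) + a * b) / pk⌋ := by
    have : (1 : ℤ) ≤ ⌊(n : ℝ) * ((k : ℝ) + a * b) / pk⌋ := by
      rw [Int.le_floor]
      exact_mod_cast hα1
    omega
  have hgoal : (n : ℝ) * (θ 0 + θ i * θ i') / ((θ 0 - θ i) * (θ 0 - θ i'))
      = (n : ℝ) * ((k : ℝ) + a * b) / pk := by
    rw [hθ0, hadef2, hbdef2, hpkdef]
  rw [hgoal]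
  rw [div_le_iff₀]
  · have : ((distChromaticNumber G 2).toNat : ℝ) = (m : ℝ) := by
      rw [hmdef, hHdef]
      rfl
    rw [this]
    exact_mod_cast hnm
  · exact_mod_cast hfloorpos
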